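/- arXiv:0911.0736 — 2 statements merged into one kernel-verified Lean document; each statement's English description precedes it below -/
import Mathlib

section
/- Let A be an M×N matrix satisfying the RIP of order K with constant δ ∈ (0,1), and let Λ ⊂ {1,…,N} with |Λ| < K. Let P_Λ be the orthogonal projection onto the column span of A_Λ (the columns of A indexed by Λ) and P_Λ^⊥ = I − P_Λ. Then for all u ∈ R^N with ||u||_0 ≤ K − |Λ| and supp(u) ∩ Λ = ∅, we have (1 − δ/(1−δ)) ||u||_2^2 ≤ ||P_Λ^⊥ A u||_2^2 ≤ (1+δ) ||u||_2^2. -/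
/-- Squared Euclidean norm of a vector. -/
def sqnorm {n : Type*} [Fintype n] (x : n → ℝ) : ℝ := ∑ i, x i ^ 2

/-- A matrix `A` satisfies the restricted isometry property (RIP) of order `K`
with constant `δ` if `(1-δ)‖x‖² ≤ ‖Ax‖² ≤ (1+δ)‖x‖²` for all `K`-sparse `x`. -/
def RIP {m n : Type*} [Fintype m] [Fintype n] (A : Matrix m n ℝ) (K : ℕ) (δ : ℝ) : Prop :=
  ∀ x : n → ℝ, (Function.support x).ncard ≤ K →
    (1 - δ) * sqnorm x ≤ sqnorm (A.mulVec x) ∧ sqnorm (A.mulVec x) ≤ (1 + δ) * sqnorm x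

/-!
Write `y = A u` and `p = P_Λ y = A z` with `supp z ⊆ Λ`. Pythagoras gives
`‖P_Λ^⊥ y‖² = ‖y‖² - ‖p‖²`, so the upper bound is immediate and the lower bound reduces to
`(1 - δ) ‖p‖² ≤ δ² ‖u‖²`. As `z` and `u` have disjoint supports, the RIP applied to `t z ± u`
and a discriminant argument give `⟨A z, A u⟩² ≤ δ² ‖z‖² ‖u‖²`. Combined with
`‖p‖² = ⟨p, y⟩ = ⟨A z, A u⟩` and `(1 - δ) ‖z‖² ≤ ‖A z‖² = ‖p‖²`, this yields the bound.
-/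

open Function Matrix

section RIP

variable {m n : Type*} [Fintype m] [Fintype n]

lemma sqnorm_nonneg (x : n → ℝ) : 0 ≤ sqnorm x :=
  Finset.sum_nonneg fun i _ => sq_nonneg (x i)

lemma sqnorm_eq_dotProduct (x : n → ℝ) : sqnorm x = x ⬝ᵥ x := by
  simp only [sqnorm, dotProduct, sq]

lemma sqnorm_ofLp (x : EuclideanSpace ℝ n) : sqnorm x.ofLp = ‖x‖ ^ 2 :=
  (EuclideanSpace.real_norm_sq_eq x).symm

lemma sqnorm_add (x y : n → ℝ) : sqnorm (x + y) = sqnorm x + 2 * (x ⬝ᵥ y) + sqnorm y := by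
  simp only [sqnorm_eq_dotProduct, add_dotProduct, dotProduct_add, dotProduct_comm y x]
  ring

lemma sqnorm_sub (x y : n → ℝ) : sqnorm (x - y) = sqnorm x - 2 * (x ⬝ᵥ y) + sqnorm y := by
  simp only [sqnorm_eq_dotProduct, sub_dotProduct, dotProduct_sub, dotProduct_comm y x]
  ring

lemma sqnorm_smul (t : ℝ) (x : n → ℝ) : sqnorm (t • x) = t ^ 2 * sqnorm x := by
  simp only [sqnorm, Pi.smul_apply, smul_eq_mul, Finset.mul_sum, mul_pow]

lemma dotProduct_eq_zero_of_disjoint_support {x y : n → ℝ} (h : Disjoint (support x) (support y)) :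
    x ⬝ᵥ y = 0 :=
  Finset.sum_eq_zero fun i _ => by
    by_cases hx : x i = 0
    · simp [hx]
    · simp [notMem_support.1 (Set.disjoint_left.1 h hx)]

lemma ncard_support_add_le (x y : n → ℝ) :
    (support (x + y)).ncard ≤ (support x).ncard + (support y).ncard :=
  (Set.ncard_le_ncard (support_add x y)).trans (Set.ncard_union_le _ _)

lemma ncard_support_sub_le (x y : n → ℝ) :
    (support (x - y)).ncard ≤ (support x).ncard + (support y).ncard :=
  (Set.ncard_le_ncard (support_sub x y)).trans (Set.ncard_union_le _ _)

variable {A : Matrix m n ℝ} {K : ℕ} {δ : ℝ} {z u : n → ℝ}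

theorem RIP.dotProduct_mulVec_le (hA : RIP A K δ) (hdisj : Disjoint (support z) (support u))
    (hcard : (support z).ncard + (support u).ncard ≤ K) :
    A *ᵥ z ⬝ᵥ A *ᵥ u ≤ δ / 2 * (sqnorm z + sqnorm u) := by
  have horth := dotProduct_eq_zero_of_disjoint_support hdisj
  have hadd := (hA (z + u) ((ncard_support_add_le z u).trans hcard)).2
  have hsub := (hA (z - u) ((ncard_support_sub_le z u).trans hcard)).1
  rw [mulVec_add, sqnorm_add, sqnorm_add, horth] at hadd
  rw [mulVec_sub, sqnorm_sub, sqnorm_sub, horth] at hsub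
  linarith

theorem RIP.sq_dotProduct_mulVec_le (hA : RIP A K δ) (hdisj : Disjoint (support z) (support u))
    (hcard : (support z).ncard + (support u).ncard ≤ K) :
    (A *ᵥ z ⬝ᵥ A *ᵥ u) ^ 2 ≤ δ ^ 2 * sqnorm z * sqnorm u := by
  set d := A *ᵥ z ⬝ᵥ A *ᵥ u
  have hquad : ∀ t : ℝ, 0 ≤ δ / 2 * sqnorm z * (t * t) + (-d) * t + δ / 2 * sqnorm u := by
    intro t
    have hsupp : support (t • z) ⊆ support z := support_const_smul_subset t z
    have h := hA.dotProduct_mulVec_le (hdisj.mono_left hsupp)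
      ((Nat.add_le_add_right (Set.ncard_le_ncard hsupp) _).trans hcard)
    rw [mulVec_smul, smul_dotProduct, smul_eq_mul, sqnorm_smul] at h
    nlinarith
  have := discrim_le_zero hquad
  rw [discrim] at this
  linarith

/-- `hproj` holds when `A z` is the orthogonal projection of `A u` onto a subspace containing it. -/
theorem RIP.sqnorm_mulVec_le_of_sqnorm_eq_dotProduct (hA : RIP A K δ) (hδ : δ < 1)
    (hdisj : Disjoint (support z) (support u))
    (hcard : (support z).ncard + (support u).ncard ≤ K)
    (hproj : sqnorm (A *ᵥ z) = A *ᵥ z ⬝ᵥ A *ᵥ u) :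
    (1 - δ) * sqnorm (A *ᵥ z) ≤ δ ^ 2 * sqnorm u := by
  have hz := (hA z ((Nat.le_add_right _ _).trans hcard)).1
  have hsq := hA.sq_dotProduct_mulVec_le hdisj hcard
  rw [← hproj] at hsq
  set S := sqnorm (A *ᵥ z)
  rcases (show 0 ≤ S from sqnorm_nonneg _).eq_or_lt with hS | hS
  · rw [← hS, mul_zero]
    exact mul_nonneg (sq_nonneg δ) (sqnorm_nonneg u)
  · refine le_of_mul_le_mul_right ?_ hS
    calc (1 - δ) * S * S = (1 - δ) * S ^ 2 := by ring
      _ ≤ (1 - δ) * (δ ^ 2 * sqnorm z * sqnorm u) := by gcongr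
      _ = δ ^ 2 * sqnorm u * ((1 - δ) * sqnorm z) := by ring
      _ ≤ δ ^ 2 * sqnorm u * S := by gcongr; exact mul_nonneg (sq_nonneg δ) (sqnorm_nonneg u)

end RIP

section Projection

variable {m n : Type*} [Fintype n]

lemma exists_support_subset_mulVec_eq (A : Matrix m n ℝ) (s : Finset n) {v : EuclideanSpace ℝ m}
    (hv : v ∈ Submodule.span ℝ {v : EuclideanSpace ℝ m | ∃ j ∈ s, v = fun i => A i j}) :
    ∃ z : n → ℝ, support z ⊆ ↑s ∧ A *ᵥ z = v := by
  have hcols : {v : EuclideanSpace ℝ m | ∃ j ∈ s, v = fun i => A i j}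
      = (fun j => WithLp.toLp 2 (Aᵀ j)) '' ↑s := by
    ext v
    constructor
    · rintro ⟨j, hj, hv⟩; exact ⟨j, hj, congrArg (WithLp.toLp 2) hv.symm⟩
    · rintro ⟨j, hj, rfl⟩; exact ⟨j, hj, rfl⟩
  rw [hcols, Finsupp.mem_span_image_iff_linearCombination] at hv
  obtain ⟨l, hl, rfl⟩ := hv
  refine ⟨l, (Finsupp.fun_support_eq l).trans_subset hl, ?_⟩
  rw [Finsupp.linearCombination_apply, Finsupp.sum_fintype _ _ (by simp), mulVec_eq_sum]
  simp [op_smul_eq_smul]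

lemma dotProduct_ofLp (x y : EuclideanSpace ℝ n) : x.ofLp ⬝ᵥ y.ofLp = inner ℝ x y := by
  rw [EuclideanSpace.inner_eq_star_dotProduct, star_trivial, dotProduct_comm]

lemma Submodule.norm_sub_starProjection_sq {E : Type*} [NormedAddCommGroup E]
    [InnerProductSpace ℝ E] (V : Submodule ℝ E) [V.HasOrthogonalProjection] (y : E) :
    ‖y - V.starProjection y‖ ^ 2 = ‖y‖ ^ 2 - ‖V.starProjection y‖ ^ 2 := by
  rw [V.norm_sq_eq_add_norm_sq_starProjection y, V.starProjection_orthogonal']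
  simp

end Projection

/-- Modified RIP for the projected matrix `P_Λ^⊥ A`: nulling the component in the
column span of `A_Λ` nearly preserves the RIP on sparse vectors supported off `Λ`. -/
theorem projected_rip {M N K : ℕ} (A : Matrix (Fin M) (Fin N) ℝ) (δ : ℝ)
    (hδ : δ ∈ Set.Ioo (0 : ℝ) 1) (hA : RIP A K δ)
    (Λ : Finset (Fin N)) (hΛ : Λ.card < K)
    (V : Submodule ℝ (EuclideanSpace ℝ (Fin M)))
    (hV : V = Submodule.span ℝ {v : EuclideanSpace ℝ (Fin M) | ∃ j ∈ Λ, v = fun i => A i j})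
    (u : Fin N → ℝ)
    (hu : (Function.support u).ncard ≤ K - Λ.card)
    (hsupp : ∀ j ∈ Λ, u j = 0)
    (y : EuclideanSpace ℝ (Fin M)) (hy : y = A.mulVec u) :
    (1 - δ / (1 - δ)) * sqnorm u ≤ sqnorm ((y - ↑(V.orthogonalProjection y) : EuclideanSpace ℝ (Fin M)) : Fin M → ℝ)
      ∧ sqnorm ((y - ↑(V.orthogonalProjection y) : EuclideanSpace ℝ (Fin M)) : Fin M → ℝ)
        ≤ (1 + δ) * sqnorm u := by
  have hδ1 : δ < 1 := hδ.2
  have hδ' : 0 < 1 - δ := sub_pos.2 hδ1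
  rw [← V.starProjection_apply, sqnorm_ofLp (y - _)]
  set p := V.starProjection y
  obtain ⟨z, hzΛ, hAz⟩ := exists_support_subset_mulVec_eq A Λ
    (by rw [← hV]; exact V.starProjection_apply_mem y)
  have hdisj : Disjoint (support z) (support u) :=
    Set.disjoint_left.2 fun j hjz hju => hju (hsupp j (hzΛ hjz))
  have hzcard : (support z).ncard ≤ Λ.card := by simpa using Set.ncard_le_ncard hzΛ
  have hproj : sqnorm (A *ᵥ z) = A *ᵥ z ⬝ᵥ A *ᵥ u := by
    rw [hAz, ← hy, sqnorm_ofLp p, dotProduct_ofLp]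
    exact (V.re_inner_starProjection_eq_normSq y).symm
  have hp := hA.sqnorm_mulVec_le_of_sqnorm_eq_dotProduct hδ1 hdisj (by omega) hproj
  rw [hAz, sqnorm_ofLp p] at hp
  obtain ⟨hlow, hup⟩ := hA u (hu.trans (Nat.sub_le _ _))
  rw [← hy, sqnorm_ofLp y] at hlow hup
  rw [V.norm_sub_starProjection_sq]
  have hcoef : 1 - δ / (1 - δ) = (1 - δ) - δ ^ 2 / (1 - δ) := by
    field_simp
    ring
  have hp' : ‖p‖ ^ 2 ≤ δ ^ 2 / (1 - δ) * sqnorm u := by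
    rw [div_mul_eq_mul_div, le_div_iff₀ hδ']
    linarith
  constructor
  · rw [hcoef, sub_mul]
    linarith
  · linarith [sq_nonneg ‖p‖]
end

section
/- Let A be a matrix satisfying the RIP of order K with constant δ, Λ with |Λ| < K, and u with ||u||_0 ≤ K − |Λ|, supp(u) ∩ Λ = ∅. Then the projection of Au onto the range of A_Λ satisfies ||P_Λ A u||_2 ≤ (δ/(1−δ)) ||A u||_2. -/
open Function Matrix RealInnerProductSpace

lemma ncard_support_add_le_s2 {α G : Type*} [Finite α] [AddZeroClass G] (f g : α → G) :
    (support (f + g)).ncard ≤ (support f).ncard + (support g).ncard :=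
  (Set.ncard_le_ncard (support_add f g) (Set.toFinite _)).trans (Set.ncard_union_le _ _)

lemma ncard_support_sub_le_s2 {α G : Type*} [Finite α] [SubtractionMonoid G] (f g : α → G) :
    (support (f - g)).ncard ≤ (support f).ncard + (support g).ncard :=
  (Set.ncard_le_ncard (support_sub f g) (Set.toFinite _)).trans (Set.ncard_union_le _ _)

section

variable {m n : Type*} [Fintype n]

lemma sqnorm_eq_norm_sq (x : n → ℝ) : sqnorm x = ‖WithLp.toLp 2 x‖ ^ 2 :=
  (EuclideanSpace.real_norm_sq_eq _).symm

lemma sqrt_sqnorm (x : n → ℝ) : √(sqnorm x) = ‖WithLp.toLp 2 x‖ := by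
  rw [sqnorm_eq_norm_sq, Real.sqrt_sq (norm_nonneg _)]

lemma inner_eq_zero_of_disjoint_support {x z : EuclideanSpace ℝ n}
    (h : Disjoint (support x) (support z)) : ⟪x, z⟫ = 0 := by
  rw [PiLp.inner_apply]
  refine Finset.sum_eq_zero fun i _ => ?_
  by_cases hx : x i = 0
  · simp [hx]
  · simp [notMem_support.mp (Set.disjoint_left.mp h hx)]

variable [DecidableEq n]

lemma exists_toLpLin_eq_of_mem_span_cols (A : Matrix m n ℝ) (Λ : Finset n)
    {v : EuclideanSpace ℝ m}
    (hv : v ∈ Submodule.span ℝ {v : EuclideanSpace ℝ m | ∃ j ∈ Λ, v = fun i => A i j}) :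
    ∃ w : EuclideanSpace ℝ n, support w ⊆ Λ ∧ toLpLin 2 2 A w = v := by
  induction hv using Submodule.span_induction with
  | mem v hv =>
    obtain ⟨j, hj, hvj⟩ := hv
    refine ⟨EuclideanSpace.single j 1, ?_, ?_⟩
    · simpa using hj
    · ext i
      simp [hvj]
  | zero => exact ⟨0, by simp, map_zero _⟩
  | add v v' _ _ hv hv' =>
    obtain ⟨w, hwΛ, rfl⟩ := hv
    obtain ⟨w', hw'Λ, rfl⟩ := hv'
    exact ⟨w + w', (support_add _ _).trans (Set.union_subset hwΛ hw'Λ), map_add _ _ _⟩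
  | smul a v _ hv =>
    obtain ⟨w, hwΛ, rfl⟩ := hv
    exact ⟨a • w, (support_const_smul_subset a _).trans hwΛ, map_smul _ _ _⟩

namespace RIP

variable [Fintype m] {A : Matrix m n ℝ} {K : ℕ} {δ : ℝ}

lemma norm_sq_bounds (hA : RIP A K δ) {x : EuclideanSpace ℝ n} (hx : (support x).ncard ≤ K) :
    (1 - δ) * ‖x‖ ^ 2 ≤ ‖toLpLin 2 2 A x‖ ^ 2 ∧ ‖toLpLin 2 2 A x‖ ^ 2 ≤ (1 + δ) * ‖x‖ ^ 2 := by
  simpa only [sqnorm_eq_norm_sq, toLpLin_apply, WithLp.toLp_ofLp] using hA x hx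

lemma two_mul_inner_le (hA : RIP A K δ) {x z : EuclideanSpace ℝ n}
    (hxz : Disjoint (support x) (support z)) (hK : (support x).ncard + (support z).ncard ≤ K) :
    2 * ⟪toLpLin 2 2 A x, toLpLin 2 2 A z⟫ ≤ δ * (‖x‖ ^ 2 + ‖z‖ ^ 2) := by
  have hadd := (hA.norm_sq_bounds (x := x + z) ((ncard_support_add_le_s2 x z).trans hK)).2
  have hsub := (hA.norm_sq_bounds (x := x - z) ((ncard_support_sub_le_s2 x z).trans hK)).1
  rw [map_add, norm_add_sq_real, norm_add_sq_real, inner_eq_zero_of_disjoint_support hxz] at hadd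
  rw [map_sub, norm_sub_sq_real, norm_sub_sq_real, inner_eq_zero_of_disjoint_support hxz] at hsub
  linarith

lemma inner_le (hA : RIP A K δ) {x z : EuclideanSpace ℝ n}
    (hxz : Disjoint (support x) (support z)) (hK : (support x).ncard + (support z).ncard ≤ K) :
    ⟪toLpLin 2 2 A x, toLpLin 2 2 A z⟫ ≤ δ * (‖x‖ * ‖z‖) := by
  rcases eq_or_ne x 0 with rfl | hx
  · simp
  rcases eq_or_ne z 0 with rfl | hz
  · simp
  have hx' : ‖x‖ ≠ 0 := norm_ne_zero_iff.mpr hx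
  have hz' : ‖z‖ ≠ 0 := norm_ne_zero_iff.mpr hz
  have hsx : support (‖x‖⁻¹ • x) = support x := support_const_smul_of_ne_zero _ _ (inv_ne_zero hx')
  have hsz : support (‖z‖⁻¹ • z) = support z := support_const_smul_of_ne_zero _ _ (inv_ne_zero hz')
  have hunit := hA.two_mul_inner_le (x := ‖x‖⁻¹ • x) (z := ‖z‖⁻¹ • z)
    (by rwa [hsx, hsz]) (by rwa [hsx, hsz])
  simp only [map_smul, real_inner_smul_left, real_inner_smul_right, norm_smul, norm_inv,
    norm_norm, inv_mul_cancel₀ hx', inv_mul_cancel₀ hz'] at hunit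
  calc ⟪toLpLin 2 2 A x, toLpLin 2 2 A z⟫
      = ‖x‖ * ‖z‖ * (‖x‖⁻¹ * (‖z‖⁻¹ * ⟪toLpLin 2 2 A x, toLpLin 2 2 A z⟫)) := by
        field_simp
    _ ≤ ‖x‖ * ‖z‖ * δ := mul_le_mul_of_nonneg_left (by linarith) (by positivity)
    _ = δ * (‖x‖ * ‖z‖) := mul_comm _ _

lemma one_sub_mul_norm_mul_norm_le (hA : RIP A K δ) (hδ : δ ≤ 1) {x z : EuclideanSpace ℝ n}
    (hx : (support x).ncard ≤ K) (hz : (support z).ncard ≤ K) :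
    (1 - δ) * (‖x‖ * ‖z‖) ≤ ‖toLpLin 2 2 A x‖ * ‖toLpLin 2 2 A z‖ := by
  refine le_of_pow_le_pow_left₀ two_ne_zero (by positivity) ?_
  calc ((1 - δ) * (‖x‖ * ‖z‖)) ^ 2 = ((1 - δ) * ‖x‖ ^ 2) * ((1 - δ) * ‖z‖ ^ 2) := by ring
    _ ≤ ‖toLpLin 2 2 A x‖ ^ 2 * ‖toLpLin 2 2 A z‖ ^ 2 :=
      mul_le_mul (hA.norm_sq_bounds hx).1 (hA.norm_sq_bounds hz).1
        (mul_nonneg (by linarith) (sq_nonneg _)) (sq_nonneg _)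
    _ = (‖toLpLin 2 2 A x‖ * ‖toLpLin 2 2 A z‖) ^ 2 := by ring

lemma inner_le_div_mul (hA : RIP A K δ) (hδ₀ : 0 ≤ δ) (hδ₁ : δ < 1) {x z : EuclideanSpace ℝ n}
    (hxz : Disjoint (support x) (support z)) (hK : (support x).ncard + (support z).ncard ≤ K) :
    ⟪toLpLin 2 2 A x, toLpLin 2 2 A z⟫
      ≤ δ / (1 - δ) * (‖toLpLin 2 2 A x‖ * ‖toLpLin 2 2 A z‖) := by
  have hlow := hA.one_sub_mul_norm_mul_norm_le hδ₁.le (x := x) (z := z) (by omega) (by omega)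
  calc ⟪toLpLin 2 2 A x, toLpLin 2 2 A z⟫ ≤ δ * (‖x‖ * ‖z‖) := hA.inner_le hxz hK
    _ = δ / (1 - δ) * ((1 - δ) * (‖x‖ * ‖z‖)) := by
      field_simp [(sub_pos.mpr hδ₁).ne']
    _ ≤ δ / (1 - δ) * (‖toLpLin 2 2 A x‖ * ‖toLpLin 2 2 A z‖) :=
      mul_le_mul_of_nonneg_left hlow (div_nonneg hδ₀ (by linarith))

end RIP

end

lemma Submodule.norm_sq_starProjection {E : Type*} [NormedAddCommGroup E] [InnerProductSpace ℝ E]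
    (V : Submodule ℝ E) [V.HasOrthogonalProjection] (y : E) :
    ‖V.starProjection y‖ ^ 2 = ⟪V.starProjection y, y⟫ := by
  simpa using (V.re_inner_starProjection_eq_normSq y).symm

/-- The projection of `Au` onto the column span of `A_Λ` is small when `u` is a
sparse vector supported off `Λ` and `A` satisfies the RIP. -/
theorem projection_small {M N K : ℕ} (A : Matrix (Fin M) (Fin N) ℝ) (δ : ℝ)
    (hδ : δ ∈ Set.Ioo (0 : ℝ) 1) (hA : RIP A K δ)
    (Λ : Finset (Fin N)) (hΛ : Λ.card < K)
    (V : Submodule ℝ (EuclideanSpace ℝ (Fin M)))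
    (hV : V = Submodule.span ℝ {v : EuclideanSpace ℝ (Fin M) | ∃ j ∈ Λ, v = fun i => A i j})
    (u : Fin N → ℝ)
    (hu : (Function.support u).ncard ≤ K - Λ.card)
    (hsupp : ∀ j ∈ Λ, u j = 0)
    (y : EuclideanSpace ℝ (Fin M)) (hy : y = A.mulVec u) :
    Real.sqrt (sqnorm ((↑(Submodule.orthogonalProjectionOnto V y) : EuclideanSpace ℝ (Fin M)) : Fin M → ℝ))
      ≤ (δ / (1 - δ)) * Real.sqrt (sqnorm (A.mulVec u)) := by
  obtain ⟨hδ₀, hδ₁⟩ := hδ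
  obtain ⟨w, hwΛ, hwp⟩ :=
    exists_toLpLin_eq_of_mem_span_cols A Λ (hV.le (V.starProjection_apply_mem y))
  have huy : toLpLin 2 2 A (WithLp.toLp 2 u) = y := by
    rw [toLpLin_apply, ← hy]
  have hw : (support w).ncard ≤ Λ.card := by
    simpa using Set.ncard_le_ncard hwΛ
  have hu' : (support (WithLp.toLp 2 u)).ncard ≤ K - Λ.card := hu
  have hdisj : Disjoint (support w) (support u) :=
    Set.disjoint_left.mpr fun j hj hju => hju (hsupp j (hwΛ hj))
  have hproj : ‖V.starProjection y‖ ^ 2 ≤ δ / (1 - δ) * ‖y‖ * ‖V.starProjection y‖ := by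
    rw [V.norm_sq_starProjection, ← hwp, ← huy, mul_assoc, mul_comm ‖_‖]
    exact hA.inner_le_div_mul hδ₀.le hδ₁ (x := w) (z := WithLp.toLp 2 u) hdisj (by omega)
  have hrhs : 0 ≤ δ / (1 - δ) * ‖y‖ := by
    have := sub_pos.mpr hδ₁
    positivity
  rw [Submodule.coe_orthogonalProjectionOnto_apply, ← hy, sqrt_sqnorm, sqrt_sqnorm,
    WithLp.toLp_ofLp, WithLp.toLp_ofLp]
  nlinarith [norm_nonneg (V.starProjection y)]
end
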